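/- arXiv:2502.01805 — 4 statements merged into one kernel-verified Lean document; each statement's English description precedes it below -/
import Mathlib

section
/- Let (Γ,φ) be an incidence gain graph whose underlying incidence structure (P,B,I) is a linear space, with gain group acting on a nonempty set Λ. If b I p and μ ≠ φ(bp)·λ, then the distance from y_{b,λ} to z_{p,μ} in 𝔐(Γ,φ) equals 3, and there is a unique 3-chain from y_{b,λ} to z_{p,μ}, namely (y_{b,λ}, z_{p,φ(bp)·λ}, x_p, z_{p,μ}). -/
open Classical

/-- An incidence structure: points `P`, lines `B`, incidence relation `inc`. -/
structure IncStruct (P B : Type*) where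
  inc : P → B → Prop

namespace IncStruct

variable {P B : Type*}

/-- Adjacency in the incidence graph on `P ⊕ B`. -/
def adj (S : IncStruct P B) : P ⊕ B → P ⊕ B → Prop
  | Sum.inl p, Sum.inr b => S.inc p b
  | Sum.inr b, Sum.inl p => S.inc p b
  | _, _ => False

/-- `c` is a `k`-chain from `u` to `v`: a list of `k+1` elements, starting at `u`,
ending at `v`, with consecutive elements incident. -/
def IsNChain (S : IncStruct P B) (k : ℕ) (u v : P ⊕ B) (c : List (P ⊕ B)) : Prop :=
  c.length = k + 1 ∧ c.head? = some u ∧ c.getLast? = some v ∧ c.Chain' S.adj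

/-- Distance between two elements of an incidence structure: the least length of a
chain from `u` to `v`, or `∞` if there is none. -/
noncomputable def dist (S : IncStruct P B) (u v : P ⊕ B) : ℕ∞ :=
  sInf {n : ℕ∞ | ∃ (k : ℕ) (c : List (P ⊕ B)), n = (k : ℕ∞) ∧ S.IsNChain k u v c}

/-- A linear space: two distinct points lie on a unique common line, every line has
at least two points, and some point-line pair is non-incident. -/
def IsLinearSpace (S : IncStruct P B) : Prop :=
  (∀ p q : P, p ≠ q → ∃! b : B, S.inc p b ∧ S.inc q b) ∧
  (∀ b : B, ∃ p q : P, p ≠ q ∧ S.inc p b ∧ S.inc q b) ∧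
  (∃ (p : P) (b : B), ¬ S.inc p b)

/-- A generalized quadrangle: all distances are at most `4`, and whenever
`d(u,v) = k < 4` there is a unique `k`-chain from `u` to `v`. -/
def IsGQ (S : IncStruct P B) : Prop :=
  (∀ u v : P ⊕ B, S.dist u v ≤ 4) ∧
  ∀ (u v : P ⊕ B) (k : ℕ), k < 4 → S.dist u v = (k : ℕ∞) →
    ∃! c : List (P ⊕ B), S.IsNChain k u v c

end IncStruct

section Construction

variable {P B G : Type*} [Group G]

/-- Incidence of Construction 𝔐: points are `P ⊕ B × Λ` (the `x_p` and `y_{b,λ}`),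
lines are `P × Λ` (the `z_{p,μ}`); `x_p I' z_{p,λ}` always, and
`y_{b,λ} I' z_{p,μ}` iff `b I p` and `μ = φ(bp) • λ`. -/
def Minc (S : IncStruct P B) (φ : B → P → G) (Λ : Type*) [MulAction G Λ] :
    P ⊕ B × Λ → P × Λ → Prop
  | Sum.inl q, (p, _) => q = p
  | Sum.inr (b, l), (p, m) => S.inc p b ∧ m = φ b p • l

/-- The incidence structure 𝔐(Γ,φ) of Construction 𝔐. -/
def MStruct (S : IncStruct P B) (φ : B → P → G) (Λ : Type*) [MulAction G Λ] :
    IncStruct (P ⊕ B × Λ) (P × Λ) := ⟨Minc S φ Λ⟩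

/-- The gain `ρ_{b,p}(q) = φ(b'p) φ(b'q)⁻¹ φ(bq)` of the walk `(b, q, b', p)`,
where `b'` is the (unique, in a linear space) line through `p` and `q`. -/
noncomputable def rho (S : IncStruct P B) (φ : B → P → G) (b : B) (p q : P) : G :=
  if h : ∃ b' : B, S.inc p b' ∧ S.inc q b' then
    φ h.choose p * (φ h.choose q)⁻¹ * φ b q
  else 1

end Construction

/-!
The chain `(y_{b,λ}, z_{p,φ(bp)λ}, x_p, z_{p,μ})` shows `d ≤ 3`. The incidence graph of any
incidence structure is bipartite, so a chain from a point to a line has odd length, and a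
`1`-chain would mean `μ = φ(bp)λ`; hence `d = 3`. In a `3`-chain
`(y_{b,λ}, z_{q,m}, w, z_{p,μ})` the point `w` is either `x_q`, which forces `q = p` and the
chain above, or some `y_{b',λ'}`; the latter is impossible, since for `q = p` it gives
`μ = φ(b'p)λ' = m = φ(bp)λ`, and for `q ≠ p` both `b` and `b'` are the line `pq`, so
`λ' = λ` and again `μ = φ(bp)λ`.
-/

namespace IncStruct

variable {P B : Type*} {S : IncStruct P B}

theorem isLeft_ne_of_adj {x y : P ⊕ B} (h : S.adj x y) : x.isLeft ≠ y.isLeft := by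
  rcases x with x | x <;> rcases y with y | y <;> simp_all [adj]

theorem isLeft_getLast_eq_iff_even {a : P ⊕ B} {t : List (P ⊕ B)}
    (h : (a :: t).IsChain S.adj) :
    ((a :: t).getLast (List.cons_ne_nil a t)).isLeft = a.isLeft ↔ Even t.length := by
  induction t generalizing a with
  | nil => simp
  | cons a' t ih =>
    rw [List.isChain_cons_cons] at h
    have hside := isLeft_ne_of_adj h.1
    rw [List.getLast_cons_cons, List.length_cons, Nat.even_add_one, ← ih h.2]
    revert hside
    generalize ((a' :: t).getLast _).isLeft = x, a.isLeft = y, a'.isLeft = y'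
    decide +revert

theorem IsNChain.odd_of_inl_inr {k : ℕ} {p : P} {b : B} {c : List (P ⊕ B)}
    (h : S.IsNChain k (Sum.inl p) (Sum.inr b) c) : Odd k := by
  obtain ⟨hlen, hhead, hlast, hchain : c.IsChain S.adj⟩ := h
  rcases c with _ | ⟨a, t⟩
  · simp at hhead
  obtain rfl : a = Sum.inl p := by simpa using hhead
  have hb : (Sum.inl p :: t).getLast (List.cons_ne_nil _ _) = Sum.inr b := by
    simpa [List.getLast?_eq_some_getLast] using hlast
  have := isLeft_getLast_eq_iff_even hchain
  rw [hb] at this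
  simp only [List.length_cons, add_left_inj] at hlen
  exact Nat.not_even_iff_odd.mp (hlen ▸ by simpa using this)

theorem isNChain_one_iff {u v : P ⊕ B} {c : List (P ⊕ B)} :
    S.IsNChain 1 u v c ↔ c = [u, v] ∧ S.adj u v := by
  constructor
  · rintro ⟨hlen, hhead, hlast, hchain : c.IsChain S.adj⟩
    match c, hlen with
    | [a₀, a₁], _ =>
      obtain rfl : a₀ = u := by simpa using hhead
      obtain rfl : a₁ = v := by simpa using hlast
      simpa using hchain
  · rintro ⟨rfl, h⟩
    exact ⟨rfl, rfl, rfl, show List.IsChain _ _ by simpa using h⟩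

theorem isNChain_three_iff {u v : P ⊕ B} {c : List (P ⊕ B)} :
    S.IsNChain 3 u v c ↔
      ∃ a w, c = [u, a, w, v] ∧ S.adj u a ∧ S.adj a w ∧ S.adj w v := by
  constructor
  · rintro ⟨hlen, hhead, hlast, hchain : c.IsChain S.adj⟩
    match c, hlen with
    | [a₀, a₁, a₂, a₃], _ =>
      obtain rfl : a₀ = u := by simpa using hhead
      obtain rfl : a₃ = v := by simpa using hlast
      exact ⟨a₁, a₂, rfl, by simpa using hchain⟩
  · rintro ⟨a, w, rfl, h⟩
    exact ⟨rfl, rfl, rfl, show List.IsChain _ _ by simpa using h⟩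

theorem dist_eq_of_isNChain_of_le {k : ℕ} {u v : P ⊕ B} {c : List (P ⊕ B)}
    (hc : S.IsNChain k u v c) (hmin : ∀ j c', S.IsNChain j u v c' → k ≤ j) :
    S.dist u v = k := by
  refine le_antisymm (sInf_le ⟨k, c, rfl, hc⟩) (le_sInf ?_)
  rintro _ ⟨j, c', rfl, hc'⟩
  exact_mod_cast hmin j c' hc'

theorem IsLinearSpace.eq_of_inc {p q : P} {b b' : B} (hS : S.IsLinearSpace) (hpq : p ≠ q)
    (hp : S.inc p b) (hq : S.inc q b) (hp' : S.inc p b') (hq' : S.inc q b') : b = b' :=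
  (hS.1 p q hpq).unique ⟨hp, hq⟩ ⟨hp', hq'⟩

end IncStruct

open IncStruct

section

variable {P B G Λ : Type*} [Group G] [MulAction G Λ] {S : IncStruct P B} {φ : B → P → G}

/-- Either `q = p`, or `b` and `b'` are both the line through `p` and `q`. -/
theorem smul_eq_of_minc_y_z_y_z (hS : S.IsLinearSpace) {b b' : B} {p q : P} {l l' m mu : Λ}
    (hbp : S.inc p b) (h₁ : Minc S φ Λ (Sum.inr (b, l)) (q, m))
    (h₂ : Minc S φ Λ (Sum.inr (b', l')) (q, m)) (h₃ : Minc S φ Λ (Sum.inr (b', l')) (p, mu)) :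
    mu = φ b p • l := by
  obtain ⟨hbq, rfl⟩ := h₁
  obtain ⟨hb'q, hm⟩ := h₂
  obtain ⟨hb'p, rfl⟩ := h₃
  by_cases hqp : q = p
  · subst hqp
    exact hm.symm
  obtain rfl : b = b' := hS.eq_of_inc hqp hbq hbp hb'q hb'p
  rw [smul_left_cancel _ hm]

theorem three_le_of_isNChain_y_z {b : B} {p : P} {lam mu : Λ} (hmu : mu ≠ φ b p • lam) {k : ℕ}
    {c : List ((P ⊕ B × Λ) ⊕ P × Λ)}
    (hc : (MStruct S φ Λ).IsNChain k (Sum.inl (Sum.inr (b, lam))) (Sum.inr (p, mu)) c) :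
    3 ≤ k := by
  obtain ⟨i, rfl⟩ := hc.odd_of_inl_inr
  rcases i with _ | i
  · exact absurd (isNChain_one_iff.1 hc).2.2 hmu
  · omega

theorem eq_of_isNChain_three_y_z (hS : S.IsLinearSpace) {b : B} {p : P} (hbp : S.inc p b)
    {lam mu : Λ} (hmu : mu ≠ φ b p • lam) {c : List ((P ⊕ B × Λ) ⊕ P × Λ)}
    (hc : (MStruct S φ Λ).IsNChain 3 (Sum.inl (Sum.inr (b, lam))) (Sum.inr (p, mu)) c) :
    c = [Sum.inl (Sum.inr (b, lam)), Sum.inr (p, φ b p • lam),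
      Sum.inl (Sum.inl p), Sum.inr (p, mu)] := by
  obtain ⟨a, w, rfl, h₁, h₂, h₃⟩ := isNChain_three_iff.1 hc
  rcases a with _ | ⟨q, m⟩
  · exact h₁.elim
  rcases w with (r | ⟨b', l'⟩) | _
  · obtain ⟨-, rfl⟩ : S.inc q b ∧ m = φ b q • lam := h₁
    obtain rfl : r = q := h₂
    obtain rfl : r = p := h₃
    rfl
  · exact absurd (smul_eq_of_minc_y_z_y_z hS hbp h₁ h₂ h₃) hmu
  · exact h₂.elim

end

theorem dist_y_z_incident_general {P B G Λ : Type*} [Group G] [MulAction G Λ]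
    (S : IncStruct P B) (φ : B → P → G) (hLS : S.IsLinearSpace)
    (b : B) (p : P) (hbp : S.inc p b) (lam mu : Λ) (hmu : mu ≠ φ b p • lam) :
    (MStruct S φ Λ).dist (Sum.inl (Sum.inr (b, lam))) (Sum.inr (p, mu)) = 3 ∧
    (MStruct S φ Λ).IsNChain 3 (Sum.inl (Sum.inr (b, lam))) (Sum.inr (p, mu))
      [Sum.inl (Sum.inr (b, lam)), Sum.inr (p, φ b p • lam),
        Sum.inl (Sum.inl p), Sum.inr (p, mu)] ∧
    ∀ c : List ((P ⊕ B × Λ) ⊕ P × Λ),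
      (MStruct S φ Λ).IsNChain 3 (Sum.inl (Sum.inr (b, lam))) (Sum.inr (p, mu)) c →
      c = [Sum.inl (Sum.inr (b, lam)), Sum.inr (p, φ b p • lam),
        Sum.inl (Sum.inl p), Sum.inr (p, mu)] := by
  have hchain : (MStruct S φ Λ).IsNChain 3 (Sum.inl (Sum.inr (b, lam))) (Sum.inr (p, mu))
      [Sum.inl (Sum.inr (b, lam)), Sum.inr (p, φ b p • lam),
        Sum.inl (Sum.inl p), Sum.inr (p, mu)] :=
    isNChain_three_iff.2 ⟨_, _, rfl, ⟨hbp, rfl⟩, rfl, rfl⟩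
  exact ⟨dist_eq_of_isNChain_of_le hchain fun _ _ hc => three_le_of_isNChain_y_z hmu hc,
    hchain, fun _ hc => eq_of_isNChain_three_y_z hLS hbp hmu hc⟩

/-- in 𝔐(Γ,φ) over a linear space, if `b I p` and `μ ≠ φ(bp) • λ`, then
the distance from `y_{b,λ}` to `z_{p,μ}` is `3` and the unique `3`-chain between them
is `(y_{b,λ}, z_{p,φ(bp)•λ}, x_p, z_{p,μ})`. -/
theorem dist_y_z_incident {P B G Λ : Type*} [Group G] [MulAction G Λ] [Nonempty Λ]
    (S : IncStruct P B) (φ : B → P → G) (hLS : S.IsLinearSpace)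
    (b : B) (p : P) (hbp : S.inc p b) (lam mu : Λ) (hmu : mu ≠ φ b p • lam) :
    (MStruct S φ Λ).dist (Sum.inl (Sum.inr (b, lam))) (Sum.inr (p, mu)) = 3 ∧
    (MStruct S φ Λ).IsNChain 3 (Sum.inl (Sum.inr (b, lam))) (Sum.inr (p, mu))
      [Sum.inl (Sum.inr (b, lam)), Sum.inr (p, φ b p • lam),
        Sum.inl (Sum.inl p), Sum.inr (p, mu)] ∧
    ∀ c : List ((P ⊕ B × Λ) ⊕ P × Λ),
      (MStruct S φ Λ).IsNChain 3 (Sum.inl (Sum.inr (b, lam))) (Sum.inr (p, mu)) c →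
      c = [Sum.inl (Sum.inr (b, lam)), Sum.inr (p, φ b p • lam),
        Sum.inl (Sum.inl p), Sum.inr (p, mu)] :=
  dist_y_z_incident_general S φ hLS b p hbp lam mu hmu
end

section
/- Let (Γ,φ) be an incidence gain graph whose underlying incidence structure (P,B,I) is a linear space, with gain group G acting on a nonempty set Λ. Then 𝔐(Γ,φ) is a generalized quadrangle if and only if for every p ∈ P and b ∈ B with p not incident to b, and every λ ∈ Λ, the function ρ_{b,p,λ} : P_b → Λ given by ρ_{b,p,λ}(q) = ρ_{b,p}(q)·λ is a bijection. -/
open Classical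

/-!
In a geometry where two points lie on at most one common line, the chain/distance definition of a
generalized quadrangle is equivalent to the classical axiom: a point `x` off a line `L` is collinear
with exactly one point of `L`. Indeed the `3`-chains from `x` to `L` are the paths `x, M, y, L`,
determined by `y`, and partial linearity rules out short cycles.

In 𝔐(Γ,φ) the axiom holds automatically for the pairs `(x_q, z_{p,μ})`, and for `(y_{b,λ}, z_{p,μ})`
with `p I b`. For `p` not on `b`, the points of `z_{p,μ}` collinear with `y_{b,λ}` are the
`y_{d, φ(dq)⁻¹ φ(bq) λ}` with `q I b`, `d` the line `pq` and `ρ_{b,p}(q) λ = μ`, one for each such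
`q`; so there the axiom says exactly that `ρ_{b,p,λ}` is a bijection.
-/

namespace IncStruct

variable {P B : Type*} {S : IncStruct P B}

def Collinear (S : IncStruct P B) (x y : P) : Prop :=
  ∃ L, S.inc x L ∧ S.inc y L

-- Lines are not required to have two points.
def IsPartialLinearSpace (S : IncStruct P B) : Prop :=
  ∀ ⦃x y : P⦄ ⦃L M : B⦄, S.inc x L → S.inc y L → S.inc x M → S.inc y M → x = y ∨ L = M

theorem IsLinearSpace.isPartialLinearSpace (h : S.IsLinearSpace) : S.IsPartialLinearSpace := by
  intro x y L M hxL hyL hxM hyM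
  by_cases hxy : x = y
  · exact .inl hxy
  · exact .inr ((h.1 x y hxy).unique ⟨hxL, hyL⟩ ⟨hxM, hyM⟩)

theorem IsLinearSpace.exists_inc (h : S.IsLinearSpace) (L : B) : ∃ x, S.inc x L :=
  let ⟨x, _, _, hxL, _⟩ := h.2.1 L
  ⟨x, hxL⟩

theorem IsPartialLinearSpace.eq_of_ne (h : S.IsPartialLinearSpace) {x y : P} {L M : B}
    (hxy : x ≠ y) (hxL : S.inc x L) (hyL : S.inc y L) (hxM : S.inc x M) (hyM : S.inc y M) :
    L = M :=
  (h hxL hyL hxM hyM).resolve_left hxy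

@[simp] theorem adj_inl_inr {x : P} {L : B} : S.adj (.inl x) (.inr L) ↔ S.inc x L := Iff.rfl

@[simp] theorem adj_inr_inl {x : P} {L : B} : S.adj (.inr L) (.inl x) ↔ S.inc x L := Iff.rfl

@[simp] theorem not_adj_inl_inl {x y : P} : ¬ S.adj (.inl x) (.inl y) := id

@[simp] theorem not_adj_inr_inr {L M : B} : ¬ S.adj (.inr L) (.inr M) := id

theorem adj_comm {u v : P ⊕ B} : S.adj u v ↔ S.adj v u := by
  rcases u with x | L <;> rcases v with y | M <;> simp

theorem isNChain_zero_iff {u v : P ⊕ B} {c : List (P ⊕ B)} :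
    S.IsNChain 0 u v c ↔ c = [u] ∧ u = v := by
  constructor
  · rintro ⟨hlen, hhead, hlast, -⟩
    obtain ⟨a, rfl⟩ := List.length_eq_one_iff.1 hlen
    simp_all
  · rintro ⟨rfl, rfl⟩
    exact ⟨rfl, rfl, rfl, List.isChain_singleton _⟩

theorem isNChain_succ_iff {k : ℕ} {u v : P ⊕ B} {c : List (P ⊕ B)} :
    S.IsNChain (k + 1) u v c ↔ ∃ w c', c = u :: c' ∧ S.adj u w ∧ S.IsNChain k w v c' := by
  constructor
  · rintro ⟨hlen, hhead, hlast, hchain⟩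
    rcases c with _ | ⟨a, _ | ⟨w, t⟩⟩
    · simp at hlen
    · simp at hlen
    · simp only [List.head?_cons, Option.some.injEq] at hhead
      subst hhead
      replace hchain := List.isChain_cons_cons.1 hchain
      exact ⟨w, w :: t, rfl, hchain.1, by simpa using hlen, rfl,
        by simpa [List.getLast?_cons_cons] using hlast, hchain.2⟩
  · rintro ⟨w, c', rfl, huw, hlen, hhead, hlast, hchain⟩
    rcases c' with _ | ⟨a, t⟩
    · simp at hlen
    · simp only [List.head?_cons, Option.some.injEq] at hhead
      subst hhead
      exact ⟨by simpa using hlen, rfl, by simpa [List.getLast?_cons_cons] using hlast,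
        List.isChain_cons_cons.2 ⟨huw, hchain⟩⟩

theorem IsNChain.cons {k : ℕ} {u w v : P ⊕ B} {c : List (P ⊕ B)} (huw : S.adj u w)
    (hc : S.IsNChain k w v c) : S.IsNChain (k + 1) u v (u :: c) :=
  isNChain_succ_iff.2 ⟨w, c, rfl, huw, hc⟩

theorem IsNChain.reverse {k : ℕ} {u v : P ⊕ B} {c : List (P ⊕ B)}
    (hc : S.IsNChain k u v c) : S.IsNChain k v u c.reverse := by
  obtain ⟨hlen, hhead, hlast, hchain⟩ := hc
  refine ⟨by simpa using hlen, by simpa using hlast, by simpa using hhead, ?_⟩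
  exact List.isChain_reverse.2 (hchain.imp fun _ _ => adj_comm.1)

theorem isNChain_two_iff {u v : P ⊕ B} {c : List (P ⊕ B)} :
    S.IsNChain 2 u v c ↔ ∃ w, c = [u, w, v] ∧ S.adj u w ∧ S.adj w v := by
  simp only [isNChain_succ_iff (k := 1), isNChain_one_iff]
  constructor
  · rintro ⟨w, _, rfl, huw, rfl, hwv⟩
    exact ⟨w, rfl, huw, hwv⟩
  · rintro ⟨w, rfl, huw, hwv⟩
    exact ⟨w, [w, v], rfl, huw, rfl, hwv⟩

theorem isNChain_three_inl_inr_iff {x : P} {L : B} {c : List (P ⊕ B)} :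
    S.IsNChain 3 (.inl x) (.inr L) c ↔
      ∃ M y, c = [.inl x, .inr M, .inl y, .inr L] ∧ S.inc x M ∧ S.inc y M ∧ S.inc y L := by
  simp only [isNChain_succ_iff (k := 2), isNChain_two_iff]
  constructor
  · rintro ⟨(_ | M), _, rfl, hxM, (y | _), rfl, hMy, hyL⟩ <;> simp_all
  · rintro ⟨M, y, rfl, hxM, hyM, hyL⟩
    exact ⟨.inr M, _, rfl, hxM, .inl y, rfl, hyM, hyL⟩

theorem IsNChain.even_iff {k : ℕ} {u v : P ⊕ B} {c : List (P ⊕ B)}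
    (hc : S.IsNChain k u v c) : Even k ↔ u.isLeft = v.isLeft := by
  induction k generalizing u c with
  | zero => simp [(isNChain_zero_iff.1 hc).2]
  | succ k ih =>
    obtain ⟨w, c', -, huw, hc'⟩ := isNChain_succ_iff.1 hc
    rw [Nat.even_add_one, ih hc']
    rcases u with x | L <;> rcases w with y | M <;> simp_all

theorem dist_le_of_isNChain {k : ℕ} {u v : P ⊕ B} {c : List (P ⊕ B)}
    (hc : S.IsNChain k u v c) : S.dist u v ≤ k :=
  sInf_le ⟨k, c, rfl, hc⟩

theorem exists_isNChain_dist {u v : P ⊕ B} (h : S.dist u v ≠ ⊤) :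
    ∃ (k : ℕ) (c : List (P ⊕ B)), S.dist u v = k ∧ S.IsNChain k u v c := by
  have hne : {n : ℕ∞ | ∃ (k : ℕ) (c : List (P ⊕ B)), n = k ∧ S.IsNChain k u v c}.Nonempty := by
    by_contra hemp
    exact h (by rw [dist, Set.not_nonempty_iff_eq_empty.1 hemp, sInf_empty])
  exact csInf_mem hne

theorem exists_isNChain_of_dist_eq {k : ℕ} {u v : P ⊕ B} (h : S.dist u v = k) :
    ∃ c, S.IsNChain k u v c := by
  obtain ⟨k', c, hk', hc⟩ := exists_isNChain_dist (h ▸ ENat.natCast_ne_top k)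
  exact ⟨c, Nat.cast_injective (hk'.symm.trans h) ▸ hc⟩

theorem dist_eq_three_of_not_inc {x : P} {L : B} (h4 : S.dist (.inl x) (.inr L) ≤ 4)
    (hxL : ¬ S.inc x L) : S.dist (.inl x) (.inr L) = 3 := by
  obtain ⟨k, c, hk, hc⟩ := exists_isNChain_dist (ne_top_of_le_ne_top (by decide) h4)
  have hodd : ¬ Even k := by simp [hc.even_iff]
  have hk4 : k ≤ 4 := by exact_mod_cast hk ▸ h4
  have hk1 : k ≠ 1 := by
    rintro rfl
    exact hxL (isNChain_one_iff.1 hc).2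
  rw [hk]
  interval_cases k <;> simp_all [Nat.even_iff]

theorem IsGQ.existsUnique_collinear (h : S.IsGQ) {x : P} {L : B} (hxL : ¬ S.inc x L) :
    ∃! y, S.inc y L ∧ S.Collinear x y := by
  obtain ⟨c, hc, hunique⟩ :=
    h.2 _ _ 3 (by decide) (by exact_mod_cast dist_eq_three_of_not_inc (h.1 _ _) hxL)
  obtain ⟨M, y, rfl, hxM, hyM, hyL⟩ := isNChain_three_inl_inr_iff.1 hc
  refine ⟨y, ⟨hyL, M, hxM, hyM⟩, ?_⟩
  rintro y' ⟨hy'L, M', hxM', hy'M'⟩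
  have := hunique _ (isNChain_three_inl_inr_iff.2 ⟨M', y', rfl, hxM', hy'M', hy'L⟩)
  simp_all

theorem dist_le_four (hpt : ∀ x, ∃ L, S.inc x L) (hline : ∀ L, ∃ x, S.inc x L)
    (hcol : ∀ x L, ∃ y, S.inc y L ∧ S.Collinear x y) (u v : P ⊕ B) : S.dist u v ≤ 4 := by
  have chain3 (x : P) (L : B) : ∃ c, S.IsNChain 3 (.inl x) (.inr L) c := by
    obtain ⟨y, hyL, M, hxM, hyM⟩ := hcol x L
    exact ⟨_, isNChain_three_inl_inr_iff.2 ⟨M, y, rfl, hxM, hyM, hyL⟩⟩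
  rcases u with x | L <;> rcases v with y | N
  · obtain ⟨L, hxL⟩ := hpt x
    obtain ⟨c, hc⟩ := chain3 y L
    exact dist_le_of_isNChain (hc.reverse.cons (adj_inl_inr.2 hxL))
  · obtain ⟨c, hc⟩ := chain3 x N
    exact (dist_le_of_isNChain hc).trans (by decide)
  · obtain ⟨c, hc⟩ := chain3 y L
    exact (dist_le_of_isNChain hc.reverse).trans (by decide)
  · obtain ⟨x, hxL⟩ := hline L
    obtain ⟨c, hc⟩ := chain3 x N
    exact dist_le_of_isNChain (hc.cons (adj_inr_inl.2 hxL))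

theorem IsPartialLinearSpace.eq_of_adj (h : S.IsPartialLinearSpace) {u v w w' : P ⊕ B}
    (huv : u ≠ v) (huw : S.adj u w) (hwv : S.adj w v) (huw' : S.adj u w') (hw'v : S.adj w' v) :
    w = w' := by
  rcases u with x | L <;> rcases v with y | M <;> rcases w with _ | N <;>
    rcases w' with _ | N' <;> simp_all
  · exact h.eq_of_ne huv huw hwv huw' hw'v
  · exact (h huw huw' hwv hw'v).resolve_right huv

theorem IsPartialLinearSpace.isNChain_three_inl_inr_eq (h : S.IsPartialLinearSpace) {x : P}
    {L : B} (hxL : ¬ S.inc x L) (hcol : ∃! y, S.inc y L ∧ S.Collinear x y)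
    {c c' : List (P ⊕ B)} (hc : S.IsNChain 3 (.inl x) (.inr L) c)
    (hc' : S.IsNChain 3 (.inl x) (.inr L) c') : c = c' := by
  obtain ⟨M, y, rfl, hxM, hyM, hyL⟩ := isNChain_three_inl_inr_iff.1 hc
  obtain ⟨M', y', rfl, hxM', hy'M', hy'L⟩ := isNChain_three_inl_inr_iff.1 hc'
  obtain rfl : y = y' := hcol.unique ⟨hyL, M, hxM, hyM⟩ ⟨hy'L, M', hxM', hy'M'⟩
  obtain rfl : M = M' := h.eq_of_ne (fun hxy : x = y => hxL (hxy ▸ hyL)) hxM hyM hxM' hy'M'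
  rfl

theorem IsPartialLinearSpace.isNChain_three_eq (h : S.IsPartialLinearSpace)
    (hcol : ∀ x L, ¬ S.inc x L → ∃! y, S.inc y L ∧ S.Collinear x y) {u v : P ⊕ B}
    (huv : ¬ S.adj u v) {c c' : List (P ⊕ B)} (hc : S.IsNChain 3 u v c)
    (hc' : S.IsNChain 3 u v c') : c = c' := by
  rcases u with x | L <;> rcases v with y | M
  · exact absurd (hc.even_iff.2 rfl) (by decide)
  · exact h.isNChain_three_inl_inr_eq huv (hcol x M huv) hc hc'
  · exact List.reverse_injective
      (h.isNChain_three_inl_inr_eq huv (hcol y L huv) hc.reverse hc'.reverse)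
  · exact absurd (hc.even_iff.2 rfl) (by decide)

theorem IsPartialLinearSpace.isNChain_eq_of_dist_eq (h : S.IsPartialLinearSpace)
    (hcol : ∀ x L, ¬ S.inc x L → ∃! y, S.inc y L ∧ S.Collinear x y) {k : ℕ} (hk : k < 4)
    {u v : P ⊕ B} (hd : S.dist u v = k) {c c' : List (P ⊕ B)} (hc : S.IsNChain k u v c)
    (hc' : S.IsNChain k u v c') : c = c' := by
  interval_cases k
  · exact (isNChain_zero_iff.1 hc).1.trans (isNChain_zero_iff.1 hc').1.symm
  · exact (isNChain_one_iff.1 hc).1.trans (isNChain_one_iff.1 hc').1.symm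
  · obtain ⟨w, rfl, huw, hwv⟩ := isNChain_two_iff.1 hc
    obtain ⟨w', rfl, huw', hw'v⟩ := isNChain_two_iff.1 hc'
    have huv : u ≠ v := by
      rintro rfl
      simpa [hd] using dist_le_of_isNChain (isNChain_zero_iff.2 ⟨rfl, rfl⟩ : S.IsNChain 0 u u _)
    rw [h.eq_of_adj huv huw hwv huw' hw'v]
  · refine h.isNChain_three_eq hcol (fun huv => ?_) hc hc'
    simpa [hd] using dist_le_of_isNChain (isNChain_one_iff.2 ⟨rfl, huv⟩)

theorem IsPartialLinearSpace.isGQ_iff (h : S.IsPartialLinearSpace) (hpt : ∀ x, ∃ L, S.inc x L)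
    (hline : ∀ L, ∃ x, S.inc x L) :
    S.IsGQ ↔ ∀ x L, ¬ S.inc x L → ∃! y, S.inc y L ∧ S.Collinear x y := by
  refine ⟨fun hGQ x L => hGQ.existsUnique_collinear, fun hcol => ⟨?_, ?_⟩⟩
  · refine dist_le_four hpt hline fun x L => ?_
    by_cases hxL : S.inc x L
    · exact ⟨x, hxL, L, hxL, hxL⟩
    · exact (hcol x L hxL).exists
  · intro u v k hk hd
    obtain ⟨c, hc⟩ := exists_isNChain_of_dist_eq hd
    exact ⟨c, hc, fun c' hc' => h.isNChain_eq_of_dist_eq hcol hk hd hc' hc⟩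

end IncStruct

section Construction

variable {P B G Λ : Type*} [Group G] [MulAction G Λ] {S : IncStruct P B} {φ : B → P → G}

theorem rho_eq_of_inc (hS : S.IsPartialLinearSpace) {p q : P} (hpq : p ≠ q) {b d : B}
    (hpd : S.inc p d) (hqd : S.inc q d) : rho S φ b p q = φ d p * (φ d q)⁻¹ * φ b q := by
  have hex : ∃ d, S.inc p d ∧ S.inc q d := ⟨d, hpd, hqd⟩
  rw [rho, dif_pos hex, hS.eq_of_ne hpq hex.choose_spec.1 hex.choose_spec.2 hpd hqd]

@[simp] theorem MStruct.inc_inl {q p : P} {μ : Λ} :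
    (MStruct S φ Λ).inc (.inl q) (p, μ) ↔ q = p := Iff.rfl

@[simp] theorem MStruct.inc_inr {b : B} {l : Λ} {p : P} {μ : Λ} :
    (MStruct S φ Λ).inc (.inr (b, l)) (p, μ) ↔ S.inc p b ∧ μ = φ b p • l := Iff.rfl

theorem MStruct.isPartialLinearSpace (hS : S.IsPartialLinearSpace) :
    (MStruct S φ Λ).IsPartialLinearSpace := by
  rintro (q | ⟨b, l⟩) (q' | ⟨b', l'⟩) ⟨p, μ⟩ ⟨p', μ'⟩ hXL hYL hXM hYM <;>
    simp only [MStruct.inc_inl, MStruct.inc_inr] at hXL hYL hXM hYM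
  · exact .inl (by rw [hXL, hYL])
  · subst hXL hXM
    exact .inr (by rw [hYL.2, hYM.2])
  · subst hYL hYM
    exact .inr (by rw [hXL.2, hXM.2])
  · obtain ⟨hpb, rfl⟩ := hXL
    obtain ⟨hpb', hμ⟩ := hYL
    obtain ⟨hp'b, rfl⟩ := hXM
    obtain ⟨hp'b', hμ'⟩ := hYM
    by_cases hpp' : p = p'
    · subst hpp'
      exact .inr rfl
    · obtain rfl := hS.eq_of_ne hpp' hpb hp'b hpb' hp'b'
      exact .inl (by rw [smul_left_cancel _ hμ])

theorem MStruct.exists_inc [Nonempty Λ] (hS : ∀ b, ∃ q, S.inc q b) (X : P ⊕ B × Λ) :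
    ∃ L, (MStruct S φ Λ).inc X L := by
  rcases X with q | ⟨b, l⟩
  · exact ⟨(q, Classical.arbitrary Λ), rfl⟩
  · obtain ⟨q, hqb⟩ := hS b
    exact ⟨(q, φ b q • l), hqb, rfl⟩

theorem MStruct.exists_inc_line (L : P × Λ) : ∃ X, (MStruct S φ Λ).inc X L :=
  ⟨.inl L.1, rfl⟩

theorem MStruct.existsUnique_collinear_inl (hLS : S.IsLinearSpace) {q p : P} (hqp : q ≠ p)
    (μ : Λ) : ∃! Y, (MStruct S φ Λ).inc Y (p, μ) ∧ (MStruct S φ Λ).Collinear (.inl q) Y := by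
  obtain ⟨d, ⟨hqd, hpd⟩, -⟩ := hLS.1 q p hqp
  refine ⟨.inr (d, (φ d p)⁻¹ • μ), ⟨⟨hpd, (smul_inv_smul _ _).symm⟩, (q, _), rfl, hqd, rfl⟩, ?_⟩
  rintro (r | ⟨d', l'⟩) ⟨hY, ⟨s, ν⟩, rfl, hYs⟩
  · simp only [MStruct.inc_inl] at hY hYs
    exact absurd (hYs.symm.trans hY) hqp
  · obtain ⟨hpd', rfl⟩ := hY
    obtain rfl := hLS.isPartialLinearSpace.eq_of_ne hqp hYs.1 hpd' hqd hpd
    rw [inv_smul_smul]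

theorem MStruct.existsUnique_collinear_inr_of_inc (hS : S.IsPartialLinearSpace) {b : B} {p : P}
    (hpb : S.inc p b) {l μ : Λ} (hμ : μ ≠ φ b p • l) :
    ∃! Y, (MStruct S φ Λ).inc Y (p, μ) ∧ (MStruct S φ Λ).Collinear (.inr (b, l)) Y := by
  refine ⟨.inl p, ⟨rfl, (p, φ b p • l), ⟨hpb, rfl⟩, rfl⟩, ?_⟩
  rintro (r | ⟨d, l'⟩) ⟨hY, ⟨q, ν⟩, ⟨hqb, rfl⟩, hqd, hν⟩
  · rw [show r = p from hY]
  · obtain ⟨hpd, rfl⟩ := hY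
    exfalso
    rcases hS hqb hpb hqd hpd with rfl | rfl
    · exact hμ hν.symm
    · exact hμ (by rw [smul_left_cancel _ hν])

theorem MStruct.inc_and_collinear_iff_of_not_inc (hLS : S.IsLinearSpace) {b : B} {p : P}
    (hpb : ¬ S.inc p b) {l μ : Λ} {Y : P ⊕ B × Λ} :
    (MStruct S φ Λ).inc Y (p, μ) ∧ (MStruct S φ Λ).Collinear (.inr (b, l)) Y ↔
      ∃ q d, S.inc q b ∧ S.inc p d ∧ S.inc q d ∧ rho S φ b p q • l = μ ∧
        Y = .inr (d, (φ d q)⁻¹ • φ b q • l) := by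
  have hS := hLS.isPartialLinearSpace
  constructor
  · rintro ⟨hY, ⟨q, ν⟩, ⟨hqb, rfl⟩, hYq⟩
    rcases Y with r | ⟨d, l'⟩
    · simp only [MStruct.inc_inl] at hY hYq
      exact absurd (hY ▸ hYq ▸ hqb) hpb
    · obtain ⟨hpd, rfl⟩ := hY
      obtain ⟨hqd, hν⟩ := hYq
      have hpq : p ≠ q := fun h => hpb (h ▸ hqb)
      obtain rfl : l' = (φ d q)⁻¹ • φ b q • l := by rw [hν, inv_smul_smul]
      refine ⟨q, d, hqb, hpd, hqd, ?_, rfl⟩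
      rw [rho_eq_of_inc hS hpq hpd hqd, mul_smul, mul_smul]
  · rintro ⟨q, d, hqb, hpd, hqd, rfl, rfl⟩
    have hpq : p ≠ q := fun h => hpb (h ▸ hqb)
    refine ⟨⟨hpd, by rw [rho_eq_of_inc hS hpq hpd hqd, mul_smul, mul_smul]⟩,
      (q, φ b q • l), ⟨hqb, rfl⟩, hqd, (smul_inv_smul _ _).symm⟩

theorem MStruct.existsUnique_collinear_inr_iff (hLS : S.IsLinearSpace) {b : B} {p : P}
    (hpb : ¬ S.inc p b) (l μ : Λ) :
    (∃! Y, (MStruct S φ Λ).inc Y (p, μ) ∧ (MStruct S φ Λ).Collinear (.inr (b, l)) Y) ↔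
      ∃! q : {q // S.inc q b}, rho S φ b p q • l = μ := by
  have hS := hLS.isPartialLinearSpace
  simp_rw [MStruct.inc_and_collinear_iff_of_not_inc hLS hpb]
  constructor
  · rintro ⟨_, ⟨q, d, hqb, hpd, hqd, hρ, rfl⟩, hunique⟩
    refine ⟨⟨q, hqb⟩, hρ, fun ⟨q', hq'b⟩ hρ' => Subtype.ext ?_⟩
    obtain ⟨d', ⟨hpd', hq'd'⟩, -⟩ := hLS.1 p q' fun h => hpb (h ▸ hq'b)
    obtain ⟨rfl, -⟩ := Prod.mk.inj (Sum.inr.inj (hunique _ ⟨q', d', hq'b, hpd', hq'd', hρ', rfl⟩))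
    exact (hS hq'b hqb hq'd' hqd).resolve_right fun hbd => hpb (hbd ▸ hpd)
  · rintro ⟨⟨q, hqb⟩, hρ, hunique⟩
    have hpq : p ≠ q := fun h => hpb (h ▸ hqb)
    obtain ⟨d, ⟨hpd, hqd⟩, -⟩ := hLS.1 p q hpq
    refine ⟨_, ⟨q, d, hqb, hpd, hqd, hρ, rfl⟩, ?_⟩
    rintro _ ⟨q', d', hq'b, hpd', hq'd', hρ', rfl⟩
    obtain rfl : q' = q := congrArg Subtype.val (hunique ⟨q', hq'b⟩ hρ')
    rw [hS.eq_of_ne hpq hpd' hq'd' hpd hqd]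

end Construction

/-- main theorem: over a linear space, 𝔐(Γ,φ) is a generalized
quadrangle iff every `ρ_{b,p,λ} : P_b → Λ` (for `p` not on `b`) is a bijection. -/
theorem MStruct_isGQ_iff_rho_bijective {P B G Λ : Type*} [Group G] [MulAction G Λ]
    [Nonempty Λ] (S : IncStruct P B) (φ : B → P → G) (hLS : S.IsLinearSpace) :
    (MStruct S φ Λ).IsGQ ↔
      ∀ (p : P) (b : B), ¬ S.inc p b → ∀ lam : Λ,
        Function.Bijective (fun q : {q : P // S.inc q b} => rho S φ b p q.1 • lam) := by
  rw [(MStruct.isPartialLinearSpace hLS.isPartialLinearSpace).isGQ_iff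
    (MStruct.exists_inc hLS.exists_inc) MStruct.exists_inc_line]
  simp only [Function.bijective_iff_existsUnique]
  constructor
  · intro h p b hpb l μ
    exact (MStruct.existsUnique_collinear_inr_iff hLS hpb l μ).1 (h _ _ fun h => hpb h.1)
  · rintro h (q | ⟨b, l⟩) ⟨p, μ⟩ hXL
    · exact MStruct.existsUnique_collinear_inl hLS hXL μ
    · by_cases hpb : S.inc p b
      · exact MStruct.existsUnique_collinear_inr_of_inc hLS.isPartialLinearSpace hpb
          fun hμ => hXL ⟨hpb, hμ⟩
      · exact (MStruct.existsUnique_collinear_inr_iff hLS hpb l μ).2 (h p b hpb l μ)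
end

section
/- Let F be a field, and consider the affine plane over F with the gain function φ with values in (F,+) given by φ({L_b,(b,y)}) = -by on vertical-line edges and φ({L_{m,b},(x,mx+b)}) = xb on non-vertical-line edges. Then for every line L and point p not on L, the function ρ_{L,p} from the points of L to F, given by ρ_{L,p}(q) = φ(M p) - φ(M q) + φ(L q) where M is the unique line through p and q, is surjective. -/
open Classical

section Affine

variable {F : Type*} [Field F]

/-- Incidence in the affine plane over `F`: lines are `Sum.inl b` (the vertical line
`L_b`) and `Sum.inr (m, b)` (the line `L_{m,b}` with slope `m` and `y`-intercept `b`). -/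
def affInc (p : F × F) : F ⊕ F × F → Prop
  | Sum.inl b => p.1 = b
  | Sum.inr (m, b) => p.2 = m * p.1 + b

/-- The affine plane over `F` as an incidence structure. -/
def affPlane (F : Type*) [Field F] : IncStruct (F × F) (F ⊕ F × F) := ⟨fun p L => affInc p L⟩

/-- The gain function: `φ({L_b,(b,y)}) = -b*y` and `φ({L_{m,b},(x,mx+b)}) = x*b`. -/
def affGain : F ⊕ F × F → F × F → F
  | Sum.inl b, p => -(b * p.2)
  | Sum.inr (_, b), p => p.1 * b

/-- The unique line through two distinct points of the affine plane. -/
noncomputable def lineThrough (p q : F × F) : F ⊕ F × F :=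
  if p.1 = q.1 then Sum.inl p.1
  else Sum.inr ((p.2 - q.2) / (p.1 - q.1), q.2 - (p.2 - q.2) / (p.1 - q.1) * q.1)

/-- `ρ_{L,p}(q) = φ(Mp) - φ(Mq) + φ(Lq)`, where `M` is the line through `p` and `q`. -/
noncomputable def rhoAff (L : F ⊕ F × F) (p q : F × F) : F :=
  affGain (lineThrough p q) p - affGain (lineThrough p q) q + affGain L q

end Affine

/-! On a line `L`, `ρ_{L,p}` is an affine function of the parameter of `q ∈ L` (the
`y`-coordinate if `L = L_b`, the `x`-coordinate if `L = L_{m,c}`), whose slope, `p.1 - b`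
resp. `m * p.1 + c - p.2`, is nonzero exactly because `p ∉ L`. -/

section Affine

variable {F : Type*} [Field F]

lemma exists_mul_add_eq {K : Type*} [DivisionRing K] {a : K} (ha : a ≠ 0) (k v : K) :
    ∃ t, a * t + k = v :=
  ⟨a⁻¹ * (v - k), by rw [mul_inv_cancel_left₀ ha, sub_add_cancel]⟩

lemma rhoAff_inl {b : F} {p : F × F} (hp : p.1 ≠ b) (t : F) :
    rhoAff (Sum.inl b) p (b, t) = (p.1 - b) * t - p.2 * b := by
  have hpb : p.1 - b ≠ 0 := sub_ne_zero.mpr hp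
  simp only [rhoAff, lineThrough, if_neg hp, affGain]
  field_simp
  ring

/-- Whether or not the line through `p` and `q` is vertical, the value is the same. -/
lemma rhoAff_inr (m c : F) (p : F × F) (t : F) :
    rhoAff (Sum.inr (m, c)) p (t, m * t + c) = (m * p.1 + c - p.2) * t + p.1 * c := by
  by_cases hpt : p.1 = t
  · simp only [rhoAff, lineThrough, if_pos hpt, affGain]
    rw [← hpt]
    ring
  · have hpt' : p.1 - t ≠ 0 := sub_ne_zero.mpr hpt
    simp only [rhoAff, lineThrough, if_neg hpt, affGain]
    field_simp
    ring

end Affine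

/-- for the gain function `φ(L_b,(b,y)) = -by`, `φ(L_{m,b},(x,mx+b)) = xb`
on the affine plane over a field `F`, the function `ρ_{L,p}` is surjective onto `F`
for every line `L` and point `p` not on `L`. -/
theorem rhoAff_surjective {F : Type*} [Field F] (L : F ⊕ F × F) (p : F × F)
    (hp : ¬ affInc p L) :
    Function.Surjective (fun q : {q : F × F // affInc q L} => rhoAff L p q.1) := by
  intro v
  rcases L with b | ⟨m, c⟩
  · obtain ⟨t, rfl⟩ := exists_mul_add_eq (sub_ne_zero.mpr hp) (-(p.2 * b)) v
    exact ⟨⟨(b, t), rfl⟩, by simp only [rhoAff_inl hp, sub_eq_add_neg]⟩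
  · have hslope : m * p.1 + c - p.2 ≠ 0 := sub_ne_zero.mpr (Ne.symm hp)
    obtain ⟨t, rfl⟩ := exists_mul_add_eq hslope (p.1 * c) v
    exact ⟨⟨(t, m * t + c), rfl⟩, rhoAff_inr m c p t⟩
end

section
/- Let F be a field, let L = L_{m,b} be a non-vertical line in the affine plane over F, and let p = (x,y) with y ≠ mx + b. For a point p₁ = (x₁, mx₁ + b) on L, the value ρ_{L,p}(p₁) of the rho function for the gain φ({L_c,(c,y)}) = -cy, φ({L_{m,c},(x,mx+c)}) = xc equals x₁(mx + b - y) + xb, regardless of whether the line through p and p₁ is vertical or not. Consequently, ρ_{L,p} : q ↦ ρ_{L,p}(q) is a bijection from the points of L onto F. -/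
open Classical

/-!
The gain difference `φ(Mp) - φ(Mq)` along the line `M` through `p` and `q` is the determinant
`p.1 * q.2 - p.2 * q.1` whether `M` is vertical or not, so `ρ_{L,p}` is affine in the coordinates of
`q`. On `L_{m,b}` it is affine in `x₁` with leading coefficient `mx + b - y`, which is nonzero
exactly because `p ∉ L`.
-/

section Affine

variable {F : Type*} [Field F]

theorem affGain_lineThrough_sub (p q : F × F) :
    affGain (lineThrough p q) p - affGain (lineThrough p q) q = p.1 * q.2 - p.2 * q.1 := by
  unfold lineThrough
  split_ifs with h
  · simp only [affGain, h]
    ring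
  · have hsub : p.1 - q.1 ≠ 0 := sub_ne_zero.mpr h
    simp only [affGain]
    field_simp
    ring

theorem rhoAff_eq (L : F ⊕ F × F) (p q : F × F) :
    rhoAff L p q = p.1 * q.2 - p.2 * q.1 + affGain L q := by
  rw [rhoAff, affGain_lineThrough_sub]

theorem rhoAff_inr_apply (m b x y x₁ : F) :
    rhoAff (Sum.inr (m, b)) (x, y) (x₁, m * x₁ + b) = x₁ * (m * x + b - y) + x * b := by
  rw [rhoAff_eq]
  simp only [affGain]
  ring

def pointsInrEquiv (m b : F) : F ≃ {q : F × F // affInc q (Sum.inr (m, b))} where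
  toFun x₁ := ⟨(x₁, m * x₁ + b), rfl⟩
  invFun q := q.1.1
  left_inv _ := rfl
  right_inv := fun ⟨_, hq⟩ => Subtype.ext (Prod.ext rfl hq.symm)

theorem bijective_mul_add {a : F} (ha : a ≠ 0) (c : F) :
    Function.Bijective fun x : F => x * a + c :=
  ((Equiv.mulRight₀ a ha).trans (Equiv.addRight c)).bijective

end Affine

/-- for a non-vertical line `L = L_{m,b}` and a point `p = (x,y)` not on
`L`, the rho value at any point `p₁ = (x₁, m x₁ + b)` of `L` equals
`x₁(mx + b - y) + xb` (whether or not the line through `p` and `p₁` is vertical);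
consequently `ρ_{L,p}` is a bijection from the points of `L` onto `F`. -/
theorem rhoAff_nonvertical_formula {F : Type*} [Field F] (m b x y : F)
    (hp : y ≠ m * x + b) :
    (∀ x₁ : F,
      rhoAff (Sum.inr (m, b)) (x, y) (x₁, m * x₁ + b) =
        x₁ * (m * x + b - y) + x * b) ∧
    Function.Bijective
      (fun q : {q : F × F // affInc q (Sum.inr (m, b))} =>
        rhoAff (Sum.inr (m, b)) (x, y) q.1) := by
  refine ⟨rhoAff_inr_apply m b x y, ?_⟩
  rw [← (pointsInrEquiv m b).bijective_comp]
  have hcoeff : m * x + b - y ≠ 0 := sub_ne_zero.mpr hp.symm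
  convert bijective_mul_add hcoeff (x * b) using 1
  funext x₁
  exact rhoAff_inr_apply m b x y x₁
end
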